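/- Let K, K' ⊆ ℝ₊ⁿ be anti-blocking bodies. Then K + (−K') = ⋃_E (P_E K × P_{E⊥}(−K')), where the union is over all coordinate subspaces E of ℝⁿ, P_E denotes orthogonal projection onto E, and P_E K × P_{E⊥}(−K') denotes the Minkowski sum of the two sets lying in the orthogonal complementary subspaces E and E⊥. -/

import Mathlib

open Set MeasureTheory Pointwise
open scoped RealInnerProductSpace

/-- A convex body `K ⊆ ℝ₊ⁿ` (compact, convex, containing `0`) is anti-blocking if
for all `y ∈ K` and `x ∈ ℝ₊ⁿ` with `x ≤ y` coordinatewise, `x ∈ K`. -/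
def IsAntiBlocking (n : ℕ) (K : Set (EuclideanSpace ℝ (Fin n))) : Prop :=
  IsCompact K ∧ Convex ℝ K ∧ (0 : EuclideanSpace ℝ (Fin n)) ∈ K ∧
    (∀ y ∈ K, ∀ i, (0:ℝ) ≤ y i) ∧
    ∀ y ∈ K, ∀ x : EuclideanSpace ℝ (Fin n),
      (∀ i, 0 ≤ x i) → (∀ i, x i ≤ y i) → x ∈ K

/-- Orthogonal projection onto the coordinate subspace spanned by the `e i`, `i ∈ S`. -/
def coordProj {n : ℕ} (S : Finset (Fin n)) (x : EuclideanSpace ℝ (Fin n)) :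
    EuclideanSpace ℝ (Fin n) :=
  WithLp.toLp 2 (fun i => if i ∈ S then x i else 0)

/-! A difference `a - b` of nonnegative vectors equals `(a - b)⁺ - (b - a)⁺`, where
`0 ≤ (a - b)⁺ ≤ a` is supported on `E = {i | b i ≤ a i}` and `0 ≤ (b - a)⁺ ≤ b` on `E⊥`;
downward closedness puts these in `K` and `K'`. Conversely, downward closedness makes every
coordinate projection of an anti-blocking body lie in the body. -/

variable {n : ℕ}

@[simp]
theorem coordProj_apply (S : Finset (Fin n)) (x : EuclideanSpace ℝ (Fin n)) (i : Fin n) :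
    coordProj S x i = if i ∈ S then x i else 0 :=
  rfl

theorem coordProj_neg (S : Finset (Fin n)) (x : EuclideanSpace ℝ (Fin n)) :
    coordProj S (-x) = -coordProj S x := by
  ext i
  by_cases hi : i ∈ S <;> simp [hi]

theorem image_coordProj_neg (S : Finset (Fin n)) (K : Set (EuclideanSpace ℝ (Fin n))) :
    coordProj S '' (-K) = -(coordProj S '' K) := by
  rw [← Set.image_neg_eq_neg, ← Set.image_neg_eq_neg, Set.image_image, Set.image_image]
  simp only [coordProj_neg]

def posPartSub (a b : EuclideanSpace ℝ (Fin n)) : EuclideanSpace ℝ (Fin n) :=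
  WithLp.toLp 2 fun i => max (a i - b i) 0

@[simp]
theorem posPartSub_apply (a b : EuclideanSpace ℝ (Fin n)) (i : Fin n) :
    posPartSub a b i = max (a i - b i) 0 :=
  rfl

theorem coordProj_posPartSub_add_coordProj_compl (a b : EuclideanSpace ℝ (Fin n)) :
    coordProj ({i | b i ≤ a i} : Finset (Fin n)) (posPartSub a b) +
      coordProj ({i | b i ≤ a i} : Finset (Fin n))ᶜ (-posPartSub b a) = a + -b := by
  ext i
  simp only [PiLp.add_apply, PiLp.neg_apply, coordProj_apply, posPartSub_apply,
    Finset.mem_compl, Finset.mem_filter, Finset.mem_univ, true_and]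
  by_cases hi : b i ≤ a i
  · rw [if_pos hi, if_neg (not_not.2 hi), max_eq_left (by linarith)]
    ring
  · rw [if_neg hi, if_pos hi, max_eq_left (by linarith)]
    ring

namespace IsAntiBlocking

variable {K : Set (EuclideanSpace ℝ (Fin n))}

theorem nonneg (hK : IsAntiBlocking n K) {y : EuclideanSpace ℝ (Fin n)} (hy : y ∈ K)
    (i : Fin n) : 0 ≤ y i :=
  hK.2.2.2.1 y hy i

theorem mem_of_le (hK : IsAntiBlocking n K) {x y : EuclideanSpace ℝ (Fin n)} (hy : y ∈ K)
    (hx₀ : ∀ i, 0 ≤ x i) (hxy : ∀ i, x i ≤ y i) : x ∈ K :=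
  hK.2.2.2.2 y hy x hx₀ hxy

theorem coordProj_mem (hK : IsAntiBlocking n K) (S : Finset (Fin n))
    {y : EuclideanSpace ℝ (Fin n)} (hy : y ∈ K) : coordProj S y ∈ K := by
  refine hK.mem_of_le hy (fun i => ?_) (fun i => ?_) <;> by_cases hi : i ∈ S <;>
    simp [hi, hK.nonneg hy i]

theorem image_coordProj_subset (hK : IsAntiBlocking n K) (S : Finset (Fin n)) :
    coordProj S '' K ⊆ K :=
  Set.image_subset_iff.2 fun _ hy => hK.coordProj_mem S hy

theorem posPartSub_mem (hK : IsAntiBlocking n K) {a b : EuclideanSpace ℝ (Fin n)} (ha : a ∈ K)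
    (hb : ∀ i, 0 ≤ b i) : posPartSub a b ∈ K :=
  hK.mem_of_le ha (fun i => le_max_right _ _)
    (fun i => max_le (by linarith [hb i]) (hK.nonneg ha i))

end IsAntiBlocking

/-- Decomposition of the Minkowski difference of two anti-blocking bodies over all
coordinate subspaces: `K + (-K') = ⋃_E (P_E K + P_{E⊥}(-K'))`. -/
theorem antiBlocking_sub_decomposition {n : ℕ}
    {K K' : Set (EuclideanSpace ℝ (Fin n))}
    (hK : IsAntiBlocking n K) (hK' : IsAntiBlocking n K') :
    K + (-K') = ⋃ S : Finset (Fin n),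
      (coordProj S '' K + coordProj Sᶜ '' (-K')) := by
  refine subset_antisymm ?_ (Set.iUnion_subset fun S => ?_)
  · rintro _ ⟨a, ha, c, hc, rfl⟩
    rw [Set.mem_neg] at hc
    have hdecomp := coordProj_posPartSub_add_coordProj_compl a (-c)
    rw [neg_neg] at hdecomp
    exact Set.mem_iUnion.2 ⟨_, hdecomp ▸ Set.add_mem_add
      (Set.mem_image_of_mem _ (hK.posPartSub_mem ha (hK'.nonneg hc)))
      (Set.mem_image_of_mem _ (Set.neg_mem_neg.2 (hK'.posPartSub_mem hc (hK.nonneg ha))))⟩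
  · rw [image_coordProj_neg]
    exact Set.add_subset_add (hK.image_coordProj_subset S)
      (Set.neg_subset_neg.2 (hK'.image_coordProj_subset Sᶜ))
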